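/- Exactness at the grad-div space: let u be a vector field on ℝ³ with polynomial components and let w : ℝ³ → ℝ be a polynomial function. If the vector field v = ∇×u + 𝔭w satisfies ∇·v = 0 everywhere on ℝ³, then w = 0 and hence v = ∇×u. -/

import Mathlib

/-!
Since mixed partial derivatives of polynomials commute, `∇·(∇×u) = 0`. On the other hand `𝔭` is a
right inverse of the divergence on polynomials: a homogeneous `h` of degree `k` has
`𝔭h = h·x/(k+3)`, and Euler's identity `x·∇h = k h` gives `∇·(h x) = (k+3) h`. Hence
`w = ∇·(∇×u + 𝔭w) = 0`.
-/

open MeasureTheory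

/-- Divergence of a vector field on ℝ³. -/
noncomputable def pdiv (v : (Fin 3 → ℝ) → (Fin 3 → ℝ)) (x : Fin 3 → ℝ) : ℝ :=
  ∑ i : Fin 3, fderiv ℝ (fun y => v y i) x (Pi.single i 1)

/-- Curl of a vector field on ℝ³. -/
noncomputable def pcurl (v : (Fin 3 → ℝ) → (Fin 3 → ℝ)) (x : Fin 3 → ℝ) : Fin 3 → ℝ :=
  ![fderiv ℝ (fun y => v y 2) x (Pi.single 1 1) - fderiv ℝ (fun y => v y 1) x (Pi.single 2 1),
    fderiv ℝ (fun y => v y 0) x (Pi.single 2 1) - fderiv ℝ (fun y => v y 2) x (Pi.single 0 1),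
    fderiv ℝ (fun y => v y 1) x (Pi.single 0 1) - fderiv ℝ (fun y => v y 0) x (Pi.single 1 1)]

/-- Gradient of a scalar field on ℝ³. -/
noncomputable def pgrad (p : (Fin 3 → ℝ) → ℝ) (x : Fin 3 → ℝ) : Fin 3 → ℝ :=
  fun i => fderiv ℝ p x (Pi.single i 1)

/-- The Poincaré-type operator 𝔭: (𝔭u)(x) = (∫₀¹ t² u(tx) dt) x. -/
noncomputable def poin (u : (Fin 3 → ℝ) → ℝ) (x : Fin 3 → ℝ) : Fin 3 → ℝ :=
  (∫ t in (0:ℝ)..1, t ^ 2 * u (t • x)) • x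

/-- `u` is a polynomial function of total degree at most `r` (P_r = {0} if r < 0). -/
def IsPolyDeg (r : ℤ) (u : (Fin 3 → ℝ) → ℝ) : Prop :=
  ∃ p : MvPolynomial (Fin 3) ℝ, (p = 0 ∨ (p.totalDegree : ℤ) ≤ r) ∧
    ∀ x, MvPolynomial.eval x p = u x

/-- `v` is a vector field with polynomial components of total degree at most `r`. -/
def IsVecPolyDeg (r : ℤ) (v : (Fin 3 → ℝ) → (Fin 3 → ℝ)) : Prop :=
  ∀ i, IsPolyDeg r fun x => v x i

/-- `u` is a polynomial function. -/
def IsPolyFun (u : (Fin 3 → ℝ) → ℝ) : Prop :=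
  ∃ p : MvPolynomial (Fin 3) ℝ, ∀ x, MvPolynomial.eval x p = u x

/-- Membership in S_k = {p ∈ (P̃_k)³ : x·p(x) = 0}. -/
def MemS (k : ℕ) (v : (Fin 3 → ℝ) → (Fin 3 → ℝ)) : Prop :=
  (∀ i, ∃ p : MvPolynomial (Fin 3) ℝ, p.IsHomogeneous k ∧ ∀ x, MvPolynomial.eval x p = v x i) ∧
    ∀ x, ∑ i : Fin 3, x i * v x i = 0

/-- Membership in the first-family Nédélec space R_k = 𝐏_{k-1} ⊕ S_k. -/
def MemR (k : ℕ) (v : (Fin 3 → ℝ) → (Fin 3 → ℝ)) : Prop :=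
  ∃ v₁ v₂, IsVecPolyDeg ((k : ℤ) - 1) v₁ ∧ MemS k v₂ ∧ v = v₁ + v₂

open MvPolynomial Finset

namespace MvPolynomial

variable {σ R : Type*}

theorem pderiv_pderiv_comm [CommSemiring R] (i j : σ) (p : MvPolynomial σ R) :
    pderiv i (pderiv j p) = pderiv j (pderiv i p) := by
  induction p using MvPolynomial.induction_on' with
  | add p q hp hq => simp only [map_add, hp, hq]
  | monomial s a =>
    rcases eq_or_ne i j with rfl | hij
    · rfl
    · simp only [pderiv_monomial]
      rw [Finsupp.tsub_apply, Finsupp.tsub_apply, Finsupp.single_eq_of_ne hij,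
        Finsupp.single_eq_of_ne hij.symm, tsub_zero, tsub_zero, tsub_tsub, tsub_tsub, add_comm]
      ring_nf

theorem IsHomogeneous.eval_smul [CommSemiring R] {p : MvPolynomial σ R} {n : ℕ}
    (hp : p.IsHomogeneous n) (t : R) (x : σ → R) : eval (t • x) p = t ^ n * eval x p := by
  rw [eval_eq, eval_eq, mul_sum]
  refine sum_congr rfl fun d hd => ?_
  have hdeg : d.degree = n := by
    by_contra h
    exact mem_support_iff.mp hd (hp.coeff_eq_zero h)
  simp only [Pi.smul_apply, smul_eq_mul, mul_pow, prod_mul_distrib, prod_pow_eq_pow_sum,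
    ← Finsupp.degree_apply, hdeg]
  ring

section Calculus

variable [Fintype σ] [DecidableEq σ] {𝕜 : Type*} [NontriviallyNormedField 𝕜]

theorem hasFDerivAt_eval (p : MvPolynomial σ 𝕜) (x : σ → 𝕜) :
    HasFDerivAt (fun y => eval y p)
      (∑ i, eval x (pderiv i p) • (ContinuousLinearMap.proj i : (σ → 𝕜) →L[𝕜] 𝕜)) x := by
  induction p using MvPolynomial.induction_on with
  | C a =>
    simp only [eval_C]
    refine (hasFDerivAt_const a x).congr_fderiv ?_
    ext v
    simp
  | add p q hp hq =>
    simp only [map_add]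
    refine (hp.add hq).congr_fderiv ?_
    ext v
    simp [add_mul, sum_add_distrib]
  | mul_X p i hp =>
    simp only [map_mul, eval_X]
    refine (hp.mul (hasFDerivAt_apply i x)).congr_fderiv ?_
    ext v
    simp [add_mul, sum_add_distrib, Pi.single_apply, mul_sum, apply_ite (eval x), mul_assoc]

theorem fderiv_eval_apply_single (p : MvPolynomial σ 𝕜) (x : σ → 𝕜) (i : σ) :
    fderiv 𝕜 (fun y => eval y p) x (Pi.single i 1) = eval x (pderiv i p) := by
  simp [(hasFDerivAt_eval p x).fderiv, Pi.single_apply]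

end Calculus

section VectorCalculus

variable [CommRing R]

noncomputable def divergence [Fintype σ] (c : σ → MvPolynomial σ R) : MvPolynomial σ R :=
  ∑ i, pderiv i (c i)

noncomputable def curl (q : Fin 3 → MvPolynomial (Fin 3) R) : Fin 3 → MvPolynomial (Fin 3) R :=
  ![pderiv 1 (q 2) - pderiv 2 (q 1), pderiv 2 (q 0) - pderiv 0 (q 2),
    pderiv 0 (q 1) - pderiv 1 (q 0)]

theorem divergence_add [Fintype σ] (c d : σ → MvPolynomial σ R) :
    divergence (c + d) = divergence c + divergence d := by
  simp only [divergence, Pi.add_apply, map_add, sum_add_distrib]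

theorem divergence_curl (q : Fin 3 → MvPolynomial (Fin 3) R) : divergence (curl q) = 0 := by
  simp only [divergence, curl, Fin.sum_univ_three, Matrix.cons_val, map_sub]
  rw [pderiv_pderiv_comm 0 1 (q 2), pderiv_pderiv_comm 0 2 (q 1), pderiv_pderiv_comm 1 2 (q 0)]
  ring

theorem divergence_mul_X [Fintype σ] (P : MvPolynomial σ R) :
    divergence (fun i => P * X i) = ∑ i, X i * pderiv i P + Fintype.card σ • P := by
  simp [divergence, sum_add_distrib, mul_comm, add_comm]

end VectorCalculus

/-- `∫₀¹ t² p(t x) dt`, computed on homogeneous components via `∫₀¹ t^(k+2) dt = 1/(k+3)`. -/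
noncomputable def poinFactor (p : MvPolynomial σ ℝ) : MvPolynomial σ ℝ :=
  ∑ k ∈ range (p.totalDegree + 1), C ((k + 3 : ℝ)⁻¹) * homogeneousComponent k p

theorem divergence_poinFactor_mul_X (p : MvPolynomial (Fin 3) ℝ) :
    divergence (fun i => poinFactor p * X i) = p := by
  have euler : ∀ k, ∑ i : Fin 3, X i * pderiv i (homogeneousComponent k p) =
      k • homogeneousComponent k p := fun k =>
    (homogeneousComponent_isHomogeneous k p).sum_X_mul_pderiv
  calc divergence (fun i => poinFactor p * X i)
      = ∑ k ∈ range (p.totalDegree + 1),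
          C ((k + 3 : ℝ)⁻¹) * ((k + 3 : ℕ) • homogeneousComponent k p) := by
        simp only [divergence_mul_X, poinFactor, map_sum, pderiv_C_mul, mul_sum, Fintype.card_fin]
        rw [sum_comm]
        simp only [mul_left_comm (X _), ← mul_sum, euler, smul_sum, ← sum_add_distrib, add_smul,
          mul_add, mul_smul_comm]
    _ = ∑ k ∈ range (p.totalDegree + 1), homogeneousComponent k p := by
        refine sum_congr rfl fun k _ => ?_
        rw [nsmul_eq_mul, ← mul_assoc, ← map_natCast C, ← map_mul]
        push_cast
        rw [inv_mul_cancel₀ (by positivity), map_one, one_mul]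
    _ = p := sum_homogeneousComponent p

end MvPolynomial

theorem pdiv_eval (c : Fin 3 → MvPolynomial (Fin 3) ℝ) (x : Fin 3 → ℝ) :
    pdiv (fun y i => eval y (c i)) x = eval x (divergence c) := by
  simp [pdiv, divergence, fderiv_eval_apply_single]

theorem pcurl_eval (q : Fin 3 → MvPolynomial (Fin 3) ℝ) (x : Fin 3 → ℝ) :
    pcurl (fun y i => eval y (q i)) x = fun i => eval x (curl q i) := by
  ext i
  fin_cases i <;> simp [pcurl, curl, fderiv_eval_apply_single]

theorem intervalIntegral_sq_mul_eval_smul {σ : Type*} (p : MvPolynomial σ ℝ) (x : σ → ℝ) :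
    ∫ t in (0 : ℝ)..1, t ^ 2 * eval (t • x) p = eval x (poinFactor p) := by
  have hsplit : ∀ t : ℝ, t ^ 2 * eval (t • x) p =
      ∑ k ∈ range (p.totalDegree + 1), t ^ (k + 2) * eval x (homogeneousComponent k p) := by
    intro t
    conv_lhs => rw [← sum_homogeneousComponent p]
    simp only [map_sum, mul_sum, (homogeneousComponent_isHomogeneous _ p).eval_smul]
    exact sum_congr rfl fun k _ => by ring
  simp only [hsplit, poinFactor, map_sum, map_mul, eval_C]
  rw [intervalIntegral.integral_finsetSum
    (f := fun k t => t ^ (k + 2) * eval x (homogeneousComponent k p)) fun k _ =>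
      ((continuous_pow (k + 2)).mul continuous_const).intervalIntegrable 0 1]
  refine sum_congr rfl fun k _ => ?_
  rw [intervalIntegral.integral_mul_const, integral_pow]
  field_simp
  push_cast
  ring

theorem poin_eval (p : MvPolynomial (Fin 3) ℝ) (x : Fin 3 → ℝ) :
    poin (fun y => eval y p) x = fun i => eval x (poinFactor p * X i) := by
  ext i
  simp [poin, intervalIntegral_sq_mul_eval_smul]

theorem pdiv_pcurl_add_poin_eval (q : Fin 3 → MvPolynomial (Fin 3) ℝ)
    (p : MvPolynomial (Fin 3) ℝ) (x : Fin 3 → ℝ) :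
    pdiv (fun y => pcurl (fun y i => eval y (q i)) y + poin (fun y => eval y p) y) x =
      eval x p := by
  have hv : (fun y => pcurl (fun y i => eval y (q i)) y + poin (fun y => eval y p) y) =
      fun y i => eval y ((curl q + fun j => poinFactor p * X j : Fin 3 → _) i) := by
    ext y i
    simp [pcurl_eval, poin_eval]
  rw [hv, pdiv_eval, divergence_add, divergence_curl, divergence_poinFactor_mul_X, zero_add]

/-- if v = ∇×u + 𝔭w is divergence free then w = 0 and v = ∇×u. -/
theorem stmt_12 (u : (Fin 3 → ℝ) → (Fin 3 → ℝ)) (w : (Fin 3 → ℝ) → ℝ)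
    (hu : ∀ i, IsPolyFun fun x => u x i) (hw : IsPolyFun w)
    (hdiv : ∀ x, pdiv (fun y => pcurl u y + poin w y) x = 0) :
    (∀ x, w x = 0) ∧ ∀ x, pcurl u x + poin w x = pcurl u x := by
  obtain ⟨p, rfl⟩ : ∃ p : MvPolynomial (Fin 3) ℝ, w = fun y => eval y p := by
    obtain ⟨p, hp⟩ := hw
    exact ⟨p, funext fun y => (hp y).symm⟩
  obtain ⟨q, rfl⟩ : ∃ q : Fin 3 → MvPolynomial (Fin 3) ℝ, u = fun y i => eval y (q i) := by
    choose q hq using hu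
    exact ⟨q, funext₂ fun y i => (hq i y).symm⟩
  have hw0 : ∀ x, eval x p = 0 := fun x => (pdiv_pcurl_add_poin_eval q p x).symm.trans (hdiv x)
  refine ⟨hw0, fun x => ?_⟩
  simp [poin, hw0]
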